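/- arXiv:math/0406541 — 7 statements merged into one kernel-verified Lean document; each statement's English description precedes it below -/
import Mathlib

section
/- If u ∈ U_i and X is an upper-triangular n×n complex matrix, then (u^{-1} X u)_{jk} = X_{jk} for all j > i. That is, conjugation by an element of the i-th row subgroup changes at most the first i rows of an upper-triangular matrix. -/
def IsUnipUT {n : ℕ} (u : Matrix (Fin n) (Fin n) ℂ) : Prop :=
  (∀ i, u i i = 1) ∧ ∀ i j : Fin n, j < i → u i j = 0

def InRowGroup {n : ℕ} (i : Fin n) (u : Matrix (Fin n) (Fin n) ℂ) : Prop :=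
  IsUnipUT u ∧ ∀ j k : Fin n, j ≠ i → j ≠ k → u j k = 0

/-- Conjugation by `u ∈ U_i` changes at most the first `i` rows of an upper-triangular
matrix: `(u⁻¹ X u)_{jk} = X_{jk}` whenever `j > i`. -/
theorem row_conjugation (n : ℕ) (i : Fin n) (u v X : Matrix (Fin n) (Fin n) ℂ)
    (hu : InRowGroup i u) (hvu : v * u = 1) (huv : u * v = 1)
    (hX : ∀ j k : Fin n, k < j → X j k = 0) :
    ∀ j k : Fin n, i < j → (v * X * u) j k = X j k := by
  obtain ⟨⟨hdiag, hlow⟩, hrow⟩ := hu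
  intro j k hij
  have hji : j ≠ i := hij.ne'
  -- off the special row, u looks like the identity
  have huδ : ∀ l m : Fin n, l ≠ i → u l m = if l = m then 1 else 0 := by
    intro l m hl
    by_cases h : l = m
    · subst h; simp [hdiag l]
    · simp [h, hrow l m hl h]
  -- v j i = 0
  have hvji : v j i = 0 := by
    have h1 := congrFun (congrFun hvu j) i
    rw [Matrix.mul_apply] at h1
    rw [Finset.sum_eq_single i (fun l _ hl => by
        rw [huδ l i hl, if_neg hl, mul_zero]) (by simp)] at h1
    rw [hdiag i, mul_one] at h1
    rw [h1, Matrix.one_apply, if_neg hji]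
  -- row j of v is the standard basis row
  have hvδ : ∀ m, v j m = if j = m then 1 else 0 := by
    intro m
    have h1 := congrFun (congrFun hvu j) m
    rw [Matrix.mul_apply] at h1
    rw [Finset.sum_eq_single m (fun l _ hlm => by
        by_cases hl : l = i
        · subst hl; rw [hvji, zero_mul]
        · rw [huδ l m hl, if_neg hlm, mul_zero]) (by simp)] at h1
    by_cases hm : m = i
    · subst hm
      rw [hdiag, mul_one] at h1
      rw [h1, Matrix.one_apply]
    · rw [huδ m m hm, if_pos rfl, mul_one] at h1
      rw [h1, Matrix.one_apply]
  have hvX : ∀ m, (v * X) j m = X j m := by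
    intro m
    rw [Matrix.mul_apply, Finset.sum_eq_single j (fun l _ hl => by
        rw [hvδ l, if_neg (fun h => hl h.symm), zero_mul]) (by simp)]
    rw [hvδ j, if_pos rfl, one_mul]
  rw [Matrix.mul_apply]
  calc ∑ m, (v * X) j m * u m k = ∑ m, X j m * u m k :=
        Finset.sum_congr rfl (fun m _ => by rw [hvX])
    _ = X j k := by
        rw [Finset.sum_eq_single k (fun m _ hmk => by
            by_cases hm : m = i
            · rw [hm, hX j i hij, zero_mul]
            · rw [huδ m k hm, if_neg hmk, mul_zero]) (by simp)]
        by_cases hk : k = i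
        · rw [hk, hdiag, mul_one]
        · rw [huδ k k hk, if_pos rfl, mul_one]
end

section
/- Let N be a strictly upper-triangular nilpotent n×n complex matrix in highest form and let u be upper-triangular with ones on the diagonal. Then u^{-1} N u is also in highest form; moreover, the entry (r,j) is a pivot of N if and only if it is a pivot of u^{-1} N u, and in that case N_{rj} = (u^{-1} N u)_{rj}. -/
/-- `X_{ik}` is a pivot of `X`: it is nonzero and all entries to its left (in row `i`)
and below it (in column `k`) vanish. -/
def IsPivot {n : ℕ} (X : Matrix (Fin n) (Fin n) ℂ) (i k : Fin n) : Prop :=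
  X i k ≠ 0 ∧ (∀ j : Fin n, j < k → X i j = 0) ∧ ∀ j : Fin n, i < j → X j k = 0

/-- `N` is in highest form: the sequence `r_1 ≤ r_2 ≤ ⋯ ≤ r_n` is nondecreasing, where
`r_j` is (one plus) the row of the pivot in column `j`, and `0` if column `j` has no pivot. -/
def HighestForm {n : ℕ} (N : Matrix (Fin n) (Fin n) ℂ) : Prop :=
  ∃ r : Fin n → ℕ, Monotone r ∧
    ∀ j : Fin n, (r j = 0 ∧ ∀ i : Fin n, ¬ IsPivot N i j) ∨
      ∃ i : Fin n, IsPivot N i j ∧ r j = (i : ℕ) + 1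

section aux

variable {n : ℕ}

lemma pivot_col_unique {N : Matrix (Fin n) (Fin n) ℂ} {i i' j : Fin n}
    (h : IsPivot N i j) (h' : IsPivot N i' j) : i = i' := by
  by_contra hne
  rcases lt_or_gt_of_ne hne with hlt | hlt
  · exact h'.1 (h.2.2 i' hlt)
  · exact h.1 (h'.2.2 i hlt)

/-- From a nonzero entry in rows `≥ c`, columns `≤ B`, extract a pivot in that region. -/
lemma exists_pivot_in_cols {N : Matrix (Fin n) (Fin n) ℂ} (c : ℕ) (B : Fin n)
    (h : ∃ a b : Fin n, c ≤ (a : ℕ) ∧ b ≤ B ∧ N a b ≠ 0) :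
    ∃ a b : Fin n, c ≤ (a : ℕ) ∧ b ≤ B ∧ IsPivot N a b := by
  classical
  set s : Finset (Fin n) :=
    Finset.univ.filter (fun b : Fin n => b ≤ B ∧ ∃ a : Fin n, c ≤ (a : ℕ) ∧ N a b ≠ 0) with hs
  have hsne : s.Nonempty := by
    obtain ⟨a, b, hca, hbB, hab⟩ := h
    exact ⟨b, by simp [hs, hbB]; exact ⟨a, hca, hab⟩⟩
  obtain ⟨b0, hb0mem, hb0min⟩ := s.exists_min_image id hsne
  have hb0 : b0 ≤ B ∧ ∃ a : Fin n, c ≤ (a : ℕ) ∧ N a b0 ≠ 0 := by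
    simpa [hs] using hb0mem
  obtain ⟨a1, hca1, ha1⟩ := hb0.2
  set t : Finset (Fin n) := Finset.univ.filter (fun a : Fin n => N a b0 ≠ 0) with ht
  have htne : t.Nonempty := ⟨a1, by simp [ht, ha1]⟩
  obtain ⟨a0, ha0mem, ha0max⟩ := t.exists_max_image id htne
  have ha0 : N a0 b0 ≠ 0 := by simpa [ht] using ha0mem
  have ha1le : a1 ≤ a0 := ha0max a1 (by simp [ht, ha1])
  refine ⟨a0, b0, le_trans hca1 ha1le, hb0.1, ha0, ?_, ?_⟩
  · intro b' hb'
    by_contra hne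
    have : b' ∈ s := by
      simp [hs]
      exact ⟨le_of_lt (lt_of_lt_of_le hb' hb0.1), a0, le_trans hca1 ha1le, hne⟩
    exact absurd (hb0min b' this) (not_le.mpr hb')
  · intro a' ha'
    by_contra hne
    exact absurd (ha0max a' (by simp [ht, hne])) (not_le.mpr ha')

/-- The inverse of a unipotent upper-triangular matrix is unipotent upper-triangular. -/
lemma inv_unipUT {u v : Matrix (Fin n) (Fin n) ℂ} (hu : IsUnipUT u) (hvu : v * u = 1) :
    IsUnipUT v := by
  have hsum : ∀ i j : Fin n, ∑ k, v i k * u k j = (1 : Matrix (Fin n) (Fin n) ℂ) i j := by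
    intro i j; rw [← Matrix.mul_apply, hvu]
  have hlow : ∀ (m : ℕ) (i j : Fin n), (j : ℕ) < m → j < i → v i j = 0 := by
    intro m
    induction m with
    | zero => intro i j h; omega
    | succ m ih =>
      intro i j hjm hji
      have h1 := hsum i j
      rw [Finset.sum_eq_single j (fun k _ hk => ?_) (fun h => absurd (Finset.mem_univ j) h)] at h1
      · rw [hu.1, mul_one, Matrix.one_apply_ne hji.ne'] at h1
        exact h1
      · rcases lt_or_gt_of_ne hk with hkj | hkj
        · rw [ih i k (by omega) (lt_trans hkj hji), zero_mul]
        · rw [hu.2 k j hkj, mul_zero]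
  have hlow' : ∀ i j : Fin n, j < i → v i j = 0 := fun i j h => hlow n i j j.isLt h
  constructor
  · intro i
    have h1 := hsum i i
    rw [Finset.sum_eq_single i (fun k _ hk => ?_) (fun h => absurd (Finset.mem_univ i) h)] at h1
    · rw [hu.1, mul_one, Matrix.one_apply_eq] at h1
      exact h1
    · rcases lt_or_gt_of_ne hk with hki | hki
      · rw [hlow' i k hki, zero_mul]
      · rw [hu.2 k i hki, mul_zero]
  · exact hlow'

end aux

/-- Conjugating a strictly upper-triangular nilpotent matrix in highest form by a
unipotent upper-triangular matrix preserves highest form, and preserves the positions and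
values of the pivots. -/
theorem highest_form_preserved (n : ℕ) (N u v : Matrix (Fin n) (Fin n) ℂ)
    (hN : ∀ i j : Fin n, j ≤ i → N i j = 0) (hHF : HighestForm N)
    (hu : IsUnipUT u) (hvu : v * u = 1) (huv : u * v = 1) :
    (∀ i j : Fin n, j ≤ i → (v * N * u) i j = 0) ∧
    HighestForm (v * N * u) ∧
    ∀ r j : Fin n,
      (IsPivot N r j ↔ IsPivot (v * N * u) r j) ∧
      (IsPivot N r j → N r j = (v * N * u) r j) := by
  classical
  obtain ⟨r, hmono, hr⟩ := hHF
  have hv : IsUnipUT v := inv_unipUT hu hvu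
  set M := v * N * u with hMdef
  have hMapply : ∀ i j : Fin n, M i j = ∑ k, ∑ l, v i k * (N k l * u l j) := by
    intro i j
    rw [hMdef, Matrix.mul_apply]
    simp only [Matrix.mul_apply, Finset.sum_mul]
    rw [Finset.sum_comm]
    congr 1; funext k; congr 1; funext l; ring
  -- r j = i + 1 whenever (i,j) is a pivot of N
  have hrval : ∀ i j : Fin n, IsPivot N i j → r j = (i : ℕ) + 1 := by
    intro i j hp
    rcases hr j with ⟨_, hnone⟩ | ⟨i', hpi', hri'⟩
    · exact absurd hp (hnone i)
    · rw [hri', pivot_col_unique hp hpi']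
  -- quadrant vanishing at a pivot
  have lemA : ∀ i j : Fin n, IsPivot N i j → ∀ k l : Fin n, i ≤ k → l ≤ j →
      ¬(k = i ∧ l = j) → N k l = 0 := by
    intro i j hp k l hik hlj hne
    by_contra h0
    rcases lt_or_eq_of_le hlj with hlj' | rfl
    · rcases lt_or_eq_of_le hik with hik' | rfl
      · obtain ⟨a, b, hca, hbl, hpab⟩ :=
          exists_pivot_in_cols ((i : ℕ) + 1) l ⟨k, l, by omega, le_refl l, h0⟩
        have h1 : r b ≤ r j := hmono (le_of_lt (lt_of_le_of_lt hbl hlj'))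
        have h2 : r b = (a : ℕ) + 1 := hrval a b hpab
        have h3 : r j = (i : ℕ) + 1 := hrval i j hp
        omega
      · exact h0 (hp.2.1 l hlj')
    · rcases lt_or_eq_of_le hik with hik' | rfl
      · exact h0 (hp.2.2 k hik')
      · exact hne ⟨rfl, rfl⟩
  -- vanishing of M entries from vanishing of N on the relevant region
  have hM0 : ∀ i j : Fin n, (∀ k l : Fin n, i ≤ k → k < l → l ≤ j → N k l = 0) →
      M i j = 0 := by
    intro i j h
    rw [hMapply]
    apply Finset.sum_eq_zero; intro k _
    apply Finset.sum_eq_zero; intro l _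
    by_cases h1 : i ≤ k
    · by_cases h2 : l ≤ j
      · by_cases h3 : k < l
        · rw [h k l h1 h3 h2]; ring
        · rw [hN k l (le_of_not_gt h3)]; ring
      · rw [hu.2 l j (lt_of_not_ge h2)]; ring
    · rw [hv.2 i k (lt_of_not_ge h1)]; ring
  have strictUT : ∀ i j : Fin n, j ≤ i → M i j = 0 := by
    intro i j hji
    exact hM0 i j (fun k l h1 h2 h3 => hN k l (le_trans h3 (le_trans hji h1)))
  -- pivot values are preserved
  have hval : ∀ i j : Fin n, IsPivot N i j → M i j = N i j := by
    intro i j hp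
    rw [hMapply]
    rw [Finset.sum_eq_single i (fun k _ hk => ?_) (fun h => absurd (Finset.mem_univ i) h)]
    · rw [Finset.sum_eq_single j (fun l _ hl => ?_) (fun h => absurd (Finset.mem_univ j) h)]
      · rw [hv.1, hu.1]; ring
      · rcases lt_or_gt_of_ne hl with hlj | hlj
        · rw [hp.2.1 l hlj]; ring
        · rw [hu.2 l j hlj]; ring
    · rcases lt_or_gt_of_ne hk with hki | hki
      · apply Finset.sum_eq_zero; intro l _
        rw [hv.2 i k hki]; ring
      · apply Finset.sum_eq_zero; intro l _
        by_cases hlj : l ≤ j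
        · rw [lemA i j hp k l (le_of_lt hki) hlj (fun h => hk h.1)]; ring
        · rw [hu.2 l j (lt_of_not_ge hlj)]; ring
  -- pivots of N are pivots of M
  have hpivM : ∀ i j : Fin n, IsPivot N i j → IsPivot M i j := by
    intro i j hp
    refine ⟨by rw [hval i j hp]; exact hp.1, fun l hl => ?_, fun k hk => ?_⟩
    · apply hM0
      intro a b h1 h2 h3
      apply lemA i j hp a b h1 (le_of_lt (lt_of_le_of_lt h3 hl))
      rintro ⟨rfl, rfl⟩
      exact absurd (lt_of_le_of_lt h3 hl) (lt_irrefl _)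
    · apply hM0
      intro a b h1 h2 h3
      apply lemA i j hp a b (le_trans hk.le h1) h3
      rintro ⟨rfl, rfl⟩
      exact absurd (lt_of_lt_of_le hk h1) (lt_irrefl _)
  -- pivots of M are pivots of N
  have hpivN : ∀ i j : Fin n, IsPivot M i j → IsPivot N i j := by
    intro i j hpM
    have hex : ∃ a b : Fin n, 0 ≤ (a : ℕ) ∧ b ≤ j ∧ N a b ≠ 0 := by
      by_contra h
      push_neg at h
      exact hpM.1 (hM0 i j (fun k l _ _ h3 => h k l (Nat.zero_le _) h3))
    obtain ⟨a, b, _, hbj, hpab⟩ := exists_pivot_in_cols 0 j hex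
    have h1 : r b ≤ r j := hmono hbj
    have h2 : r b = (a : ℕ) + 1 := hrval a b hpab
    rcases hr j with ⟨hj0, _⟩ | ⟨i', hpi', _⟩
    · omega
    · have := pivot_col_unique (hpivM i' j hpi') hpM
      exact this ▸ hpi'
  refine ⟨strictUT, ⟨r, hmono, fun j => ?_⟩,
    fun rr j => ⟨⟨hpivM rr j, hpivN rr j⟩, fun hp => (hval rr j hp).symm⟩⟩
  rcases hr j with ⟨h0, hnone⟩ | ⟨i, hpi, hri⟩
  · exact Or.inl ⟨h0, fun i hpMi => hnone i (hpivN i j hpMi)⟩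
  · exact Or.inr ⟨i, hpivM i j hpi, hri⟩
end

section
/- If N is a strictly upper-triangular nilpotent n×n complex matrix in highest form, then the first dim(ker N) columns of N are zero. -/
/-- If `N` is a strictly upper-triangular nilpotent matrix in highest form, then its
first `dim (ker N)` columns are zero. -/
theorem highest_form_initial_columns_zero (n : ℕ) (N : Matrix (Fin n) (Fin n) ℂ)
    (hN : ∀ i j : Fin n, j ≤ i → N i j = 0) (hHF : HighestForm N) :
    ∀ j : Fin n, (j : ℕ) < Module.finrank ℂ (LinearMap.ker N.mulVecLin) →
      ∀ i : Fin n, N i j = 0 := by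
  classical
  obtain ⟨r, hr_mono, hr⟩ := hHF
  -- r k = 0 iff column k has no pivot
  have hr0 : ∀ k : Fin n, (¬∃ i, IsPivot N i k) ↔ r k = 0 := by
    intro k
    rcases hr k with ⟨h0, hnp⟩ | ⟨i, hip, hri⟩
    · exact ⟨fun _ => h0, fun _ h => hnp _ h.choose_spec⟩
    · constructor
      · intro h; exact absurd ⟨i, hip⟩ h
      · intro h; rw [hri] at h; omega
  have pivotless_down : ∀ j k : Fin n, j ≤ k → (¬∃ i, IsPivot N i k) →
      ¬∃ i, IsPivot N i j := by
    intro j k hjk hk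
    rw [hr0] at hk ⊢
    have := hr_mono hjk
    omega
  -- pivotless columns are zero
  have zerocol : ∀ k : Fin n, (¬∃ i, IsPivot N i k) → ∀ i, N i k = 0 := by
    suffices H : ∀ m : ℕ, ∀ k : Fin n, (k : ℕ) = m → (¬∃ i, IsPivot N i k) →
        ∀ i, N i k = 0 by
      intro k; exact H k k rfl
    intro m
    induction m using Nat.strong_induction_on with
    | _ m IH =>
      intro k hkm hpl i
      by_contra hNik
      set s : Finset (Fin n) := Finset.univ.filter (fun i' => N i' k ≠ 0) with hs
      have hin : i ∈ s := by simp [hs, hNik]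
      set i0 := s.max' ⟨i, hin⟩ with hi0def
      have hi0 : N i0 k ≠ 0 := by
        have := s.max'_mem ⟨i, hin⟩
        simpa [hs] using this
      have hcol : ∀ j, i0 < j → N j k = 0 := by
        intro j hj
        by_contra h
        exact absurd (s.le_max' j (by simp [hs, h])) (not_le.mpr hj)
      have hnotpiv : ¬ IsPivot N i0 k := fun h => hpl ⟨i0, h⟩
      have h2 : ¬ (∀ j : Fin n, j < k → N i0 j = 0) := fun h => hnotpiv ⟨hi0, h, hcol⟩
      push_neg at h2
      obtain ⟨j, hjlt, hNj⟩ := h2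
      have hjpl := pivotless_down j k hjlt.le hpl
      exact hNj (IH (j : ℕ) (by omega) j rfl hjpl i0)
  -- the finset of pivotless columns
  set Z : Finset (Fin n) := Finset.univ.filter (fun j => ¬∃ i, IsPivot N i j) with hZ
  -- kernel is contained in span of standard basis vectors indexed by Z
  have hker : LinearMap.ker N.mulVecLin ≤
      Submodule.span ℂ ((fun j => (Pi.single j 1 : Fin n → ℂ)) '' ↑Z) := by
    intro x hx
    have hx0 : N.mulVec x = 0 := by
      simpa [Matrix.mulVecLin_apply] using hx
    have key : ∀ m : ℕ, ∀ k : Fin n, n - (k : ℕ) = m → (∃ i, IsPivot N i k) →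
        x k = 0 := by
      intro m
      induction m using Nat.strong_induction_on with
      | _ m IH =>
        intro k hkm hk
        obtain ⟨i, hne, hrow, hcol⟩ := hk
        have hNi : ∑ j, N i j * x j = 0 := by
          have : (N.mulVec x) i = 0 := by rw [hx0]; rfl
          simpa [Matrix.mulVec, dotProduct] using this
        have hterm : ∀ j ∈ Finset.univ, j ≠ k → N i j * x j = 0 := by
          intro j _ hj
          rcases lt_trichotomy j k with h | h | h
          · rw [hrow j h, zero_mul]
          · exact absurd h hj
          · by_cases hz : N i j = 0
            · rw [hz, zero_mul]
            · -- j > k is a pivot column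
              have hrk : 1 ≤ r k := by
                by_contra hc
                have : r k = 0 := by omega
                exact ((hr0 k).mpr this) ⟨i, hne, hrow, hcol⟩
              have hrj : r j ≠ 0 := by
                have := hr_mono h.le
                omega
              have hjpiv : ∃ i', IsPivot N i' j := by
                by_contra hc
                exact hrj ((hr0 j).mp hc)
              have : x j = 0 := IH (n - (j : ℕ)) (by
                have hjk : (k : ℕ) < (j : ℕ) := h
                omega) j rfl hjpiv
              rw [this, mul_zero]
        have hsum : ∑ j, N i j * x j = N i k * x k :=
          Finset.sum_eq_single_of_mem k (Finset.mem_univ k) hterm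
        have : N i k * x k = 0 := by rw [← hsum]; exact hNi
        exact (mul_eq_zero.mp this).resolve_left hne
    have hx_eq : x = ∑ j ∈ Z, x j • (Pi.single j 1 : Fin n → ℂ) := by
      have huniv : x = ∑ j : Fin n, x j • (Pi.single j 1 : Fin n → ℂ) := by
        funext t
        simp [Finset.sum_apply, Pi.single_apply]
      conv_lhs => rw [huniv]
      symm
      apply Finset.sum_subset (Finset.subset_univ Z)
      intro j _ hj
      have hjpiv : ∃ i', IsPivot N i' j := by
        by_contra hc
        exact hj (Finset.mem_filter.mpr ⟨Finset.mem_univ j, hc⟩)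
      have : x j = 0 := key (n - (j : ℕ)) j rfl hjpiv
      simp [this]
    rw [hx_eq]
    exact Submodule.sum_mem _ fun j hj =>
      Submodule.smul_mem _ _ (Submodule.subset_span ⟨j, by simpa using hj, rfl⟩)
  -- dimension bound
  have hfin : Module.finrank ℂ (LinearMap.ker N.mulVecLin) ≤ Z.card := by
    set W : Finset (Fin n → ℂ) := Z.image (fun j => (Pi.single j 1 : Fin n → ℂ)) with hW
    have himg : ((fun j => (Pi.single j 1 : Fin n → ℂ)) '' ↑Z) = (↑W : Set (Fin n → ℂ)) := by
      rw [hW, Finset.coe_image]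
    rw [himg] at hker
    have h1 : Module.finrank ℂ (LinearMap.ker N.mulVecLin) ≤
        Module.finrank ℂ (Submodule.span ℂ (↑W : Set (Fin n → ℂ))) :=
      Submodule.finrank_mono hker
    have h2 : Module.finrank ℂ (Submodule.span ℂ (↑W : Set (Fin n → ℂ))) ≤ W.card :=
      finrank_span_finset_le_card W
    have h3 : W.card ≤ Z.card := Finset.card_image_le
    omega
  -- conclusion
  intro j hj i
  have hjZ : j ∈ Z := by
    by_contra hjZ
    have hsub : Z ⊆ Finset.Iio j := by
      intro k hk
      rw [Finset.mem_Iio]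
      by_contra hk'
      push_neg at hk'
      have hkpl : ¬∃ i', IsPivot N i' k := by simpa [hZ] using hk
      exact hjZ (Finset.mem_filter.mpr ⟨Finset.mem_univ j, pivotless_down j k hk' hkpl⟩)
    have hcard := Finset.card_le_card hsub
    have : (Finset.Iio j).card = (j : ℕ) := Fin.card_Iio j
    omega
  have hjpl : ¬∃ i', IsPivot N i' j := by simpa [hZ] using hjZ
  exact zerocol j hjpl i
end

section
/- Let S be a diagonal n×n complex matrix with eigenvalue c, and suppose the c-eigenspace E_c of S is spanned by consecutive standard basis vectors e_i, e_{i+1}, …, e_{i+j}. Then for all upper-triangular n×n matrices X and Y, (XY)_c = X_c Y_c, where X_c denotes the submatrix of X obtained by keeping only the rows and columns k with S_{kk} = c. Conversely, if (XY)_c = X_c Y_c holds for all upper-triangular X and Y, then E_c is spanned by a set of consecutive standard basis vectors. -/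
/-- The submatrix `X_c` of `X` obtained by keeping only the rows and columns `k`
with `S_{kk} = c`. -/
def subAt {n : ℕ} (S X : Matrix (Fin n) (Fin n) ℂ) (c : ℂ) :
    Matrix {k : Fin n // S k k = c} {k : Fin n // S k k = c} ℂ :=
  fun a b => X a.1 b.1

/-- `(XY)_c = X_c Y_c` holds for all upper-triangular `X`, `Y` if and only if the
`c`-eigenspace of `S` is spanned by consecutive standard basis vectors. -/
theorem morphism_condition (n : ℕ) (S : Matrix (Fin n) (Fin n) ℂ)
    (hS : ∀ i j : Fin n, i ≠ j → S i j = 0) (c : ℂ) (hc : ∃ k : Fin n, S k k = c) :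
    (∃ i j : Fin n, {k : Fin n | S k k = c} = Set.Icc i j) ↔
    ∀ X Y : Matrix (Fin n) (Fin n) ℂ,
      (∀ a b : Fin n, b < a → X a b = 0) → (∀ a b : Fin n, b < a → Y a b = 0) →
      subAt S (X * Y) c = subAt S X c * subAt S Y c := by
  classical
  constructor
  · rintro ⟨i, j, hij⟩ X Y hX hY
    funext a b
    have hai : a.1 ∈ Set.Icc i j := by rw [← hij]; exact a.2
    have hbi : b.1 ∈ Set.Icc i j := by rw [← hij]; exact b.2
    show ∑ k : Fin n, X a.1 k * Y k b.1
        = ∑ k : {k : Fin n // S k k = c}, X a.1 k.1 * Y k.1 b.1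
    have key : ∀ k ∈ Finset.univ, X a.1 k * Y k b.1 ≠ 0 → S k k = c := by
      intro k _ hk
      by_contra hne
      have h1 : a.1 ≤ k := le_of_not_gt fun hlt => hk (by rw [hX a.1 k hlt, zero_mul])
      have h2 : k ≤ b.1 := le_of_not_gt fun hlt => hk (by rw [hY k b.1 hlt, mul_zero])
      have : k ∈ Set.Icc i j := ⟨le_trans hai.1 h1, le_trans h2 hbi.2⟩
      rw [← hij] at this
      exact hne this
    rw [← Finset.sum_filter_of_ne key,
      Finset.sum_subtype (p := fun k => S k k = c)
        (Finset.univ.filter (fun k => S k k = c))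
        (by intro x; simp) (fun k => X a.1 k * Y k b.1)]
  · intro h
    set T : Finset (Fin n) := Finset.univ.filter (fun k => S k k = c) with hT
    obtain ⟨k0, hk0⟩ := hc
    have hTne : T.Nonempty := ⟨k0, by simp [hT, hk0]⟩
    refine ⟨T.min' hTne, T.max' hTne, ?_⟩
    have hmin : S (T.min' hTne) (T.min' hTne) = c := by
      have := T.min'_mem hTne; simp [hT] at this; exact this
    have hmax : S (T.max' hTne) (T.max' hTne) = c := by
      have := T.max'_mem hTne; simp [hT] at this; exact this
    ext k
    simp only [Set.mem_setOf_eq, Set.mem_Icc]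
    constructor
    · intro hk
      exact ⟨T.min'_le k (by simp [hT, hk]), T.le_max' k (by simp [hT, hk])⟩
    · rintro ⟨h1, h2⟩
      by_contra hkc
      set a := T.min' hTne with ha
      set b := T.max' hTne with hb
      have hlt1 : a < k := lt_of_le_of_ne h1 (by rintro rfl; exact hkc hmin)
      have hlt2 : k < b := lt_of_le_of_ne h2 (by rintro rfl; exact hkc hmax)
      set X : Matrix (Fin n) (Fin n) ℂ :=
        fun p q => if p = a ∧ q = k then 1 else 0 with hXdef
      set Y : Matrix (Fin n) (Fin n) ℂ :=
        fun p q => if p = k ∧ q = b then 1 else 0 with hYdef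
      have hX : ∀ p q : Fin n, q < p → X p q = 0 := by
        intro p q hpq
        simp only [hXdef, ite_eq_right_iff]
        rintro ⟨rfl, rfl⟩
        exact absurd hpq (not_lt.2 hlt1.le)
      have hY : ∀ p q : Fin n, q < p → Y p q = 0 := by
        intro p q hpq
        simp only [hYdef, ite_eq_right_iff]
        rintro ⟨rfl, rfl⟩
        exact absurd hpq (not_lt.2 hlt2.le)
      have heq := congrFun (congrFun (h X Y hX hY) ⟨a, hmin⟩) ⟨b, hmax⟩
      have hL : subAt S (X * Y) c ⟨a, hmin⟩ ⟨b, hmax⟩ = 1 := by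
        show ∑ m : Fin n, X a m * Y m b = 1
        rw [Finset.sum_eq_single k]
        · simp [hXdef, hYdef]
        · intro m _ hm
          simp [hXdef, hm]
        · simp
      have hR : (subAt S X c * subAt S Y c) ⟨a, hmin⟩ ⟨b, hmax⟩ = 0 := by
        show ∑ m : {k : Fin n // S k k = c}, X a m.1 * Y m.1 b = 0
        apply Finset.sum_eq_zero
        intro m _
        have : m.1 ≠ k := by rintro hmk; exact hkc (hmk ▸ m.2)
        simp [hXdef, this]
      rw [heq, hR] at hL
      exact one_ne_zero hL.symm
end

section
/- Let N be a nilpotent n×n complex matrix whose only nonzero entries are the pivots N_{r_j, j} with r_1 ≤ ⋯ ≤ r_n (highest form), let w be a permutation matrix, and H a Hessenberg space determined by a Hessenberg function h. If every pivot of N lies in a nonzero entry of wHw^{-1}, then for each i the set {u ∈ U_i ∩ U_w : the i-th row of u^{-1}Nu lies in the i-th row of wHw^{-1}} is homeomorphic to ℂ^d, where d = |{k : k > i, w(i) > w(k), and h(w(j)) ≥ w(i) whenever N_{kj} is a pivot of N}|. -/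
/-- `u ∈ U_w`, i.e. `u` is unipotent upper-triangular and `w⁻¹ u w` is lower-triangular. -/
def InUw {n : ℕ} (w : Equiv.Perm (Fin n)) (u : Matrix (Fin n) (Fin n) ℂ) : Prop :=
  IsUnipUT u ∧ ∀ j k : Fin n, j ≠ k → w j < w k → u j k = 0

namespace NilRowAux

noncomputable def extFun {n : ℕ} (T : Finset (Fin n)) (c : T → ℂ) (b : Fin n) : ℂ :=
  if hb : b ∈ T then c ⟨b, hb⟩ else 0

noncomputable def rowMat {n : ℕ} (i : Fin n) (T : Finset (Fin n)) (c : T → ℂ) :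
    Matrix (Fin n) (Fin n) ℂ :=
  Matrix.of fun a b => if a = i then extFun T c b else 0

theorem rowMat_apply {n : ℕ} (i : Fin n) (T : Finset (Fin n)) (c : T → ℂ) (a b : Fin n) :
    rowMat i T c a b = if a = i then extFun T c b else 0 := rfl

end NilRowAux

open NilRowAux

open Classical in
/-- The nilpotent row lemma: if the pivots of a highest-form nilpotent `N` (whose only
nonzero entries are pivots) lie in nonzero entries of `wHw⁻¹`, then the set of
`u ∈ U_i ∩ U_w` whose `i`-th row of `u⁻¹Nu` lies in the `i`-th row of `wHw⁻¹` is
homeomorphic to `ℂ^d`. -/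
theorem nilpotent_row_lemma (n : ℕ) (h : Fin n → Fin n)
    (hmono : Monotone h) (hge : ∀ i, i ≤ h i)
    (w : Equiv.Perm (Fin n)) (i : Fin n) (N : Matrix (Fin n) (Fin n) ℂ)
    (hN : ∀ a b : Fin n, b ≤ a → N a b = 0) (hHF : HighestForm N)
    (honly : ∀ k j : Fin n, N k j ≠ 0 → IsPivot N k j)
    (hpivH : ∀ k j : Fin n, IsPivot N k j → w k ≤ h (w j)) :
    Nonempty (
      {u : Matrix (Fin n) (Fin n) ℂ // InRowGroup i u ∧ InUw w u ∧
        ∃ v : Matrix (Fin n) (Fin n) ℂ, v * u = 1 ∧ u * v = 1 ∧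
          ∀ j : Fin n, h (w j) < w i → (v * N * u) i j = 0} ≃ₜ
      (Fin ((Finset.univ.filter (fun k : Fin n =>
        i < k ∧ w k < w i ∧ ∀ j : Fin n, IsPivot N k j → w i ≤ h (w j))).card) → ℂ)) := by
  classical
  set T : Finset (Fin n) := Finset.univ.filter (fun k : Fin n =>
      i < k ∧ w k < w i ∧ ∀ j : Fin n, IsPivot N k j → w i ≤ h (w j)) with hTdef
  have hTmem : ∀ k : Fin n, k ∈ T ↔
      i < k ∧ w k < w i ∧ ∀ j : Fin n, IsPivot N k j → w i ≤ h (w j) := by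
    intro k; simp [hTdef]
  have hiT : i ∉ T := fun hk => lt_irrefl i ((hTmem i).1 hk).1
  -- uniqueness of pivot rows in a column
  have hpuniq : ∀ b x j : Fin n, IsPivot N b j → N x j ≠ 0 → x = b := by
    intro b x j hb hx
    rcases lt_trichotomy x b with hlt | heq | hgt
    · exact absurd ((honly x j hx).2.2 b hlt) hb.1
    · exact heq
    · exact absurd (hb.2.2 x hgt) hx
  -- row i of N vanishes on "bad" columns
  have hNi : ∀ j : Fin n, h (w j) < w i → N i j = 0 := by
    intro j hj
    by_contra hne
    exact absurd (hpivH i j (honly i j hne)) (not_le.2 hj)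
  -- key computation for row-supported D
  have key : ∀ D : Matrix (Fin n) (Fin n) ℂ,
      (∀ a b : Fin n, a ≠ i → D a b = 0) → D i i = 0 → (∀ b : Fin n, D i b ≠ 0 → i < b) →
      ((1 - D) * (1 + D) = 1) ∧ ((1 + D) * (1 - D) = 1) ∧
      (∀ j : Fin n, ((1 - D) * N * (1 + D)) i j = N i j - ∑ x : Fin n, D i x * N x j) := by
    intro D hD hDii hDlt
    have hDD : D * D = 0 := by
      ext a b
      simp only [Matrix.mul_apply, Matrix.zero_apply]
      refine Finset.sum_eq_zero fun x _ => ?_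
      by_cases hx : x = i
      · rw [hx]
        by_cases ha : a = i
        · rw [ha]; simp [hDii]
        · simp [hD a i ha]
      · simp [hD x b hx]
    have h1 : (1 - D) * (1 + D) = 1 := by
      have e : (1 - D) * (1 + D) = 1 + D - D - D * D := by noncomm_ring
      rw [e, hDD]; abel
    have h2 : (1 + D) * (1 - D) = 1 := by
      have e : (1 + D) * (1 - D) = 1 + D - D - D * D := by noncomm_ring
      rw [e, hDD]; abel
    refine ⟨h1, h2, fun j => ?_⟩
    have hND : ∀ j' : Fin n, (N * D) i j' = 0 := by
      intro j'
      simp only [Matrix.mul_apply]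
      refine Finset.sum_eq_zero fun x _ => ?_
      by_cases hx : x = i
      · rw [hx]; simp [hN i i le_rfl]
      · simp [hD x j' hx]
    have hDNii : (D * N) i i = 0 := by
      simp only [Matrix.mul_apply]
      refine Finset.sum_eq_zero fun x _ => ?_
      by_cases hx : D i x = 0
      · simp [hx]
      · simp [hN x i (le_of_lt (hDlt x hx))]
    have hDND : (D * N * D) i j = 0 := by
      rw [Matrix.mul_apply]
      refine Finset.sum_eq_zero fun x _ => ?_
      by_cases hx : x = i
      · rw [hx, hDNii]; ring
      · rw [hD x j hx]; ring
    have hexp : (1 - D) * N * (1 + D) = N + N * D - D * N - D * N * D := by noncomm_ring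
    rw [hexp]
    simp only [Matrix.sub_apply, Matrix.add_apply, hND j, hDND, Matrix.mul_apply]
    ring
  -- properties of rowMat
  have hRM : ∀ c : T → ℂ,
      (∀ a b : Fin n, a ≠ i → rowMat i T c a b = 0) ∧ rowMat i T c i i = 0 ∧
      (∀ b : Fin n, rowMat i T c i b ≠ 0 → b ∈ T) := by
    intro c
    refine ⟨fun a b ha => by simp [rowMat_apply, ha], ?_, fun b hb => ?_⟩
    · simp [rowMat_apply, extFun, hiT]
    · by_contra hbT
      exact hb (by simp [rowMat_apply, extFun, hbT])
  -- the subtype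
  set S := {u : Matrix (Fin n) (Fin n) ℂ // InRowGroup i u ∧ InUw w u ∧
      ∃ v : Matrix (Fin n) (Fin n) ℂ, v * u = 1 ∧ u * v = 1 ∧
        ∀ j : Fin n, h (w j) < w i → (v * N * u) i j = 0} with hSdef
  -- membership of 1 + rowMat
  have memS : ∀ c : T → ℂ, InRowGroup i (1 + rowMat i T c) ∧ InUw w (1 + rowMat i T c) ∧
      ∃ v : Matrix (Fin n) (Fin n) ℂ, v * (1 + rowMat i T c) = 1 ∧
        (1 + rowMat i T c) * v = 1 ∧
        ∀ j : Fin n, h (w j) < w i →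
          (v * N * (1 + rowMat i T c)) i j = 0 := by
    intro c
    obtain ⟨hD1, hD2, hD3⟩ := hRM c
    set D := rowMat i T c with hDdef
    have hD3' : ∀ b : Fin n, D i b ≠ 0 → i < b := fun b hb => ((hTmem b).1 (hD3 b hb)).1
    obtain ⟨h1, h2, h3⟩ := key D hD1 hD2 hD3'
    have hut : IsUnipUT (1 + D) := by
      constructor
      · intro a
        by_cases ha : a = i
        · rw [ha]; simp [Matrix.add_apply, hD2]
        · simp [Matrix.add_apply, hD1 a a ha]
      · intro a b hba
        have hab : a ≠ b := fun e => absurd (e ▸ hba) (lt_irrefl _)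
        by_cases ha : a = i
        · have hz : D a b = 0 := by
            rw [ha]
            by_contra hne
            exact absurd hba (not_lt.2 (le_of_lt (ha ▸ hD3' b hne)))
          simp [Matrix.add_apply, hz, Matrix.one_apply_ne hab]
        · simp [Matrix.add_apply, hD1 a b ha, Matrix.one_apply_ne hab]
    refine ⟨⟨hut, fun a b ha hab => ?_⟩, ⟨hut, fun a b hab hw => ?_⟩,
      1 - D, h1, h2, fun j hj => ?_⟩
    · simp [Matrix.add_apply, hD1 a b ha, Matrix.one_apply_ne hab]
    · by_cases ha : a = i
      · have hz : D a b = 0 := by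
          rw [ha]
          by_contra hne
          exact absurd (ha ▸ hw) (not_lt.2 (le_of_lt (((hTmem b).1 (hD3 b hne)).2.1)))
        simp [Matrix.add_apply, hz, Matrix.one_apply_ne hab]
      · simp [Matrix.add_apply, hD1 a b ha, Matrix.one_apply_ne hab]
    · rw [h3 j, hNi j hj]
      have : ∑ x : Fin n, D i x * N x j = 0 := by
        refine Finset.sum_eq_zero fun x _ => ?_
        by_cases hx : D i x = 0
        · simp [hx]
        · by_cases hNx : N x j = 0
          · simp [hNx]
          · exact absurd (((hTmem x).1 (hD3 x hx)).2.2 j (honly x j hNx)) (not_le.2 hj)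
      rw [this]; ring
  -- the forward and backward maps
  let toF : S → (T → ℂ) := fun u k => u.1 i k
  let invF : (T → ℂ) → S := fun c => ⟨1 + rowMat i T c, memS c⟩
  have right_inv : ∀ c : T → ℂ, toF (invF c) = c := by
    intro c
    funext k
    have hki : (k : Fin n) ≠ i := ne_of_gt ((hTmem k).1 k.2).1
    simp [toF, invF, Matrix.add_apply, rowMat_apply, extFun, k.2,
      Matrix.one_apply_ne (Ne.symm hki)]
  have left_inv : ∀ u : S, invF (toF u) = u := by
    rintro ⟨U, hRG, hUw, v, hvU, hUv, hrow⟩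
    apply Subtype.ext
    show 1 + rowMat i T (fun k => U i k) = U
    -- first: structural facts about U
    set D : Matrix (Fin n) (Fin n) ℂ := U - 1 with hDdef
    have hD1 : ∀ a b : Fin n, a ≠ i → D a b = 0 := by
      intro a b ha
      by_cases hab : a = b
      · subst hab; simp [hDdef, Matrix.sub_apply, hRG.1.1 a]
      · simp [hDdef, Matrix.sub_apply, hRG.2 a b ha hab, Matrix.one_apply_ne hab]
    have hD2 : D i i = 0 := by simp [hDdef, Matrix.sub_apply, hRG.1.1 i]
    have hD3 : ∀ b : Fin n, D i b ≠ 0 → i < b := by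
      intro b hb
      by_cases hib : b = i
      · exact absurd (hib ▸ hD2) hb
      · have hUib : U i b ≠ 0 := by
          intro hz
          exact hb (by simp [hDdef, Matrix.sub_apply, hz, Matrix.one_apply_ne (Ne.symm hib)])
        rcases lt_trichotomy i b with hlt | heq | hgt
        · exact hlt
        · exact absurd heq.symm hib
        · exact absurd (hRG.1.2 i b hgt) hUib
    obtain ⟨h1, h2, h3⟩ := key D hD1 hD2 hD3
    have hU : U = 1 + D := by rw [hDdef]; abel
    have hv : v = 1 - D := by
      have : U * (1 - D) = 1 := by rw [hU]; exact h2
      calc v = v * (U * (1 - D)) := by rw [this, mul_one]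
        _ = (v * U) * (1 - D) := by rw [mul_assoc]
        _ = 1 - D := by rw [hvU, one_mul]
    -- entrywise equality
    ext a b
    by_cases ha : a = i
    · rw [ha]
      by_cases hbi : b = i
      · rw [hbi]
        simp [Matrix.add_apply, rowMat_apply, extFun, hiT, hRG.1.1 i]
      · by_cases hbT : b ∈ T
        · simp [Matrix.add_apply, rowMat_apply, extFun, hbT,
            Matrix.one_apply_ne (Ne.symm hbi)]
        · -- show U i b = 0
          have hUib : U i b = 0 := by
            by_cases hib : i < b
            · by_cases hwb : w b < w i
              · -- get bad pivot column
                have : ¬ ∀ j : Fin n, IsPivot N b j → w i ≤ h (w j) := by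
                  intro hall
                  exact hbT ((hTmem b).2 ⟨hib, hwb, hall⟩)
                push_neg at this
                obtain ⟨j₀, hpiv, hlt⟩ := this
                have hz := hrow j₀ hlt
                rw [hv, hU, h3 j₀, hNi j₀ hlt] at hz
                have hsum : ∑ x : Fin n, D i x * N x j₀ = D i b * N b j₀ := by
                  refine Finset.sum_eq_single b (fun x _ hxb => ?_) (fun hb' => absurd (Finset.mem_univ b) hb')
                  by_cases hNx : N x j₀ = 0
                  · simp [hNx]
                  · exact absurd (hpuniq b x j₀ hpiv hNx) hxb
                rw [hsum] at hz
                have hmul : D i b * N b j₀ = 0 := by linear_combination -hz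
                have hDib : D i b = 0 := (mul_eq_zero.1 hmul).resolve_right hpiv.1
                have hDib' := hDib
                rw [hDdef] at hDib'
                simpa [Matrix.sub_apply, Matrix.one_apply_ne
                  (show i ≠ b from Ne.symm hbi), sub_eq_zero] using hDib'
              · have hwlt : w i < w b := by
                  rcases lt_trichotomy (w i) (w b) with h' | h' | h'
                  · exact h'
                  · exact absurd (w.injective h') (Ne.symm hbi)
                  · exact absurd h' hwb
                exact hUw.2 i b (Ne.symm hbi) hwlt
            · rcases lt_trichotomy b i with hlt | heq | hgt
              · exact hRG.1.2 i b hlt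
              · exact absurd heq hbi
              · exact absurd hgt hib
          simp [Matrix.add_apply, rowMat_apply, extFun, hbT, hUib,
            Matrix.one_apply_ne (Ne.symm hbi)]
    · by_cases hab : a = b
      · rw [← hab]
        simp [Matrix.add_apply, rowMat_apply, ha, hRG.1.1 a]
      · simp [Matrix.add_apply, rowMat_apply, ha, hRG.2 a b ha hab,
          Matrix.one_apply_ne hab]
  -- continuity
  have contF : Continuous toF := by
    refine continuous_pi fun k => ?_
    exact (continuous_subtype_val.matrix_elem i (k : Fin n))
  have contI : Continuous invF := by
    refine Continuous.subtype_mk ?_ _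
    refine continuous_matrix fun a b => ?_
    simp only [Matrix.add_apply, rowMat_apply, extFun]
    refine Continuous.add continuous_const ?_
    by_cases ha : a = i
    · simp only [ha, if_true]
      by_cases hb : b ∈ T
      · simpa [hb] using continuous_apply (⟨b, hb⟩ : T)
      · simp only [hb, dif_neg, not_false_iff]; exact continuous_const
    · simp only [ha, if_neg, if_false]; exact continuous_const
  -- assemble
  have e1 : S ≃ₜ (T → ℂ) :=
    { toFun := toF
      invFun := invF
      left_inv := left_inv
      right_inv := right_inv
      continuous_toFun := contF
      continuous_invFun := contI }
  have e2 : (T → ℂ) ≃ₜ (Fin T.card → ℂ) :=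
    Homeomorph.piCongrLeft (Y := fun _ : Fin T.card => ℂ)
      (Fintype.equivFinOfCardEq (Fintype.card_coe T))
  exact ⟨e1.trans e2⟩
end

section
/- Fix a permutation matrix w and let U_w = {u ∈ U : w^{-1} u w is lower-triangular}, where U is the group of upper-triangular matrices with ones on the diagonal. Then U_w is a subgroup of U homeomorphic to ℂ^{ℓ(w)}, where ℓ(w) = |{(i,j) : 1 ≤ i < j ≤ n, w(i) > w(j)}|; the free entries of u ∈ U_w are exactly the entries (i,k) with i < k and w(i) > w(k), and all other above-diagonal entries of u vanish. -/
namespace SchubertAux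

variable {n : ℕ} (w : Equiv.Perm (Fin n))

lemma supp {u : Matrix (Fin n) (Fin n) ℂ} (hu : InUw w u) {j k : Fin n}
    (h : u j k ≠ 0) : j = k ∨ (j < k ∧ w k < w j) := by
  by_contra hc
  push_neg at hc
  obtain ⟨h1, h2⟩ := hc
  rcases lt_trichotomy j k with hlt | he | hgt
  · have hw : w j ≠ w k := fun he => h1 (w.injective he)
    rcases lt_or_gt_of_ne hw with hw1 | hw2
    · exact h (hu.2 j k h1 hw1)
    · exact absurd hw2 (not_lt.2 (h2 hlt))
  · exact h1 he
  · exact h (hu.1.2 j k hgt)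

lemma one_mem : InUw w (1 : Matrix (Fin n) (Fin n) ℂ) := by
  refine ⟨⟨fun i => Matrix.one_apply_eq i, fun i j h => ?_⟩, fun j k h _ => ?_⟩
  · exact Matrix.one_apply_ne (fun he => absurd he.symm (ne_of_lt h))
  · exact Matrix.one_apply_ne h

lemma mem_of_supp {u : Matrix (Fin n) (Fin n) ℂ} (hd : ∀ i, u i i = 1)
    (hs : ∀ j k : Fin n, ¬(j = k ∨ (j < k ∧ w k < w j)) → u j k = 0) : InUw w u := by
  refine ⟨⟨hd, fun i j h => ?_⟩, fun j k hne hw => ?_⟩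
  · apply hs; rintro (rfl | ⟨h', _⟩)
    · exact lt_irrefl _ h
    · exact absurd h' (not_lt.2 h.le)
  · apply hs; rintro (rfl | ⟨_, h'⟩)
    · exact hne rfl
    · exact absurd h' (not_lt.2 hw.le)

lemma mul_mem {u v : Matrix (Fin n) (Fin n) ℂ} (hu : InUw w u) (hv : InUw w v) :
    InUw w (u * v) := by
  apply mem_of_supp w
  · intro i
    rw [Matrix.mul_apply, Finset.sum_eq_single i]
    · rw [hu.1.1 i, hv.1.1 i, one_mul]
    · intro m _ hm
      rcases lt_or_gt_of_ne hm with h | h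
      · rw [hu.1.2 i m h, zero_mul]
      · rw [hv.1.2 m i h, mul_zero]
    · intro h; exact absurd (Finset.mem_univ i) h
  · intro j k h
    rw [Matrix.mul_apply]
    apply Finset.sum_eq_zero
    intro m _
    by_contra hm
    have h1 : u j m ≠ 0 := fun h0 => hm (by simp [h0])
    have h2 : v m k ≠ 0 := fun h0 => hm (by simp [h0])
    have r1 := supp w hu h1
    have r2 := supp w hv h2
    apply h
    rcases r1 with rfl | ⟨a1, b1⟩
    · exact r2
    · rcases r2 with rfl | ⟨a2, b2⟩
      · exact Or.inr ⟨a1, b1⟩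
      · exact Or.inr ⟨a1.trans a2, b2.trans b1⟩

lemma pow_supp {u : Matrix (Fin n) (Fin n) ℂ} (hu : InUw w u) :
    ∀ k : ℕ, ∀ j m : Fin n, ((1 - u) ^ (k + 1)) j m ≠ 0 →
      (j < m ∧ w m < w j) ∧ j.val + (k + 1) ≤ m.val := by
  have hN : ∀ j m : Fin n, ((1 : Matrix (Fin n) (Fin n) ℂ) - u) j m ≠ 0 →
      j < m ∧ w m < w j := by
    intro j m h
    have hne : j ≠ m := by
      rintro rfl
      apply h
      simp [Matrix.sub_apply, Matrix.one_apply_eq, hu.1.1 j]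
    have hu0 : u j m ≠ 0 := by
      intro h0
      apply h
      simp [Matrix.sub_apply, Matrix.one_apply_ne hne, h0]
    rcases supp w hu hu0 with rfl | hr
    · exact absurd rfl hne
    · exact hr
  intro k
  induction k with
  | zero =>
    intro j m h
    rw [pow_one] at h
    have := hN j m h
    exact ⟨this, this.1⟩
  | succ k ih =>
    intro j m h
    rw [pow_succ, Matrix.mul_apply] at h
    obtain ⟨p, _, hp⟩ := Finset.exists_ne_zero_of_sum_ne_zero h
    have h1 : ((1 - u) ^ (k + 1)) j p ≠ 0 := fun h0 => hp (by simp [h0])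
    have h2 : ((1 : Matrix (Fin n) (Fin n) ℂ) - u) p m ≠ 0 := fun h0 => hp (by simp [h0])
    obtain ⟨⟨hlt, hwlt⟩, hv⟩ := ih j p h1
    obtain ⟨hlt2, hwlt2⟩ := hN p m h2
    exact ⟨⟨hlt.trans hlt2, hwlt2.trans hwlt⟩, by omega⟩

lemma geom_mem {u : Matrix (Fin n) (Fin n) ℂ} (hu : InUw w u) :
    InUw w (∑ k ∈ Finset.range n, (1 - u) ^ k) := by
  apply mem_of_supp w
  · intro i
    have hn : 0 ∈ Finset.range n := Finset.mem_range.2 i.pos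
    rw [Matrix.sum_apply, Finset.sum_eq_single 0]
    · simp [Matrix.one_apply_eq]
    · intro k _ hk
      obtain ⟨k, rfl⟩ := Nat.exists_eq_succ_of_ne_zero hk
      by_contra h
      exact absurd (pow_supp w hu k i i h).1.1 (lt_irrefl i)
    · intro h; exact absurd hn h
  · intro j m h
    rw [Matrix.sum_apply]
    apply Finset.sum_eq_zero
    intro k _
    by_contra hk
    rcases Nat.eq_zero_or_pos k with rfl | hpos
    · apply hk
      rw [pow_zero]
      apply Matrix.one_apply_ne
      rintro rfl; exact h (Or.inl rfl)
    · obtain ⟨k, rfl⟩ := Nat.exists_eq_succ_of_ne_zero hpos.ne'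
      exact h (Or.inr (pow_supp w hu k j m hk).1)

lemma pow_n_zero {u : Matrix (Fin n) (Fin n) ℂ} (hu : InUw w u) :
    (1 - u) ^ n = 0 := by
  rcases Nat.eq_zero_or_pos n with rfl | hpos
  · ext i j; exact absurd i.2 (Nat.not_lt_zero _)
  · obtain ⟨m, rfl⟩ := Nat.exists_eq_succ_of_ne_zero hpos.ne'
    ext i j
    by_contra h
    have := (pow_supp w hu m i j h).2
    omega

lemma mul_geom {u : Matrix (Fin n) (Fin n) ℂ} (hu : InUw w u) :
    u * (∑ k ∈ Finset.range n, (1 - u) ^ k) = 1 := by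
  have h := mul_geom_sum ((1 : Matrix (Fin n) (Fin n) ℂ) - u) n
  rw [pow_n_zero w hu, sub_sub_cancel_left, neg_mul, zero_sub, neg_inj] at h
  exact h

lemma inv_mem {u v : Matrix (Fin n) (Fin n) ℂ} (hu : InUw w u)
    (hvu : v * u = 1) : InUw w v := by
  have hv : v = ∑ k ∈ Finset.range n, (1 - u) ^ k := by
    calc v = v * (u * (∑ k ∈ Finset.range n, (1 - u) ^ k)) := by
            rw [mul_geom w hu, mul_one]
      _ = (v * u) * (∑ k ∈ Finset.range n, (1 - u) ^ k) := by rw [mul_assoc]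
      _ = ∑ k ∈ Finset.range n, (1 - u) ^ k := by rw [hvu, one_mul]
  rw [hv]
  exact geom_mem w hu

open Classical in
noncomputable def fromCoords (f : {p : Fin n × Fin n // p.1 < p.2 ∧ w p.2 < w p.1} → ℂ) :
    Matrix (Fin n) (Fin n) ℂ :=
  fun i k => if i = k then 1 else if h : i < k ∧ w k < w i then f ⟨(i, k), h⟩ else 0

open Classical in
lemma fromCoords_mem (f : {p : Fin n × Fin n // p.1 < p.2 ∧ w p.2 < w p.1} → ℂ) :
    InUw w (fromCoords w f) := by
  apply mem_of_supp w
  · intro i; simp [fromCoords]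
  · intro j k h
    push_neg at h
    unfold fromCoords
    rw [if_neg h.1, dif_neg]
    intro hc
    exact absurd hc.2 (not_lt.2 (h.2 hc.1))

open Classical in
lemma fromCoords_toCoords {u : Matrix (Fin n) (Fin n) ℂ} (hu : InUw w u) :
    fromCoords w (fun p => u p.1.1 p.1.2) = u := by
  ext i k
  unfold fromCoords
  by_cases hik : i = k
  · subst hik; simp [hu.1.1 i]
  · rw [if_neg hik]
    by_cases h : i < k ∧ w k < w i
    · rw [dif_pos h]
    · rw [dif_neg h]
      by_contra h0
      rcases supp w hu (Ne.symm h0) with rfl | hr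
      · exact hik rfl
      · exact h hr

open Classical in
noncomputable def coordEquiv : {u : Matrix (Fin n) (Fin n) ℂ // InUw w u} ≃ₜ
    ({p : Fin n × Fin n // p.1 < p.2 ∧ w p.2 < w p.1} → ℂ) where
  toFun u := fun p => u.1 p.1.1 p.1.2
  invFun f := ⟨fromCoords w f, fromCoords_mem w f⟩
  left_inv u := Subtype.ext (fromCoords_toCoords w u.2)
  right_inv f := by
    funext p
    obtain ⟨⟨i, k⟩, hik, hw⟩ := p
    simp only [fromCoords]
    rw [if_neg (ne_of_lt hik), dif_pos ⟨hik, hw⟩]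
  continuous_toFun := by
    apply continuous_pi
    intro p
    exact continuous_subtype_val.matrix_elem _ _
  continuous_invFun := by
    apply Continuous.subtype_mk
    apply continuous_matrix
    intro i k
    unfold fromCoords
    by_cases hik : i = k
    · simp only [if_pos hik]; exact continuous_const
    · simp only [if_neg hik]
      by_cases h : i < k ∧ w k < w i
      · simp only [dif_pos h]; exact continuous_apply _
      · simp only [dif_neg h]; exact continuous_const

end SchubertAux

open Classical in
/-- `U_w` is a subgroup of `U` homeomorphic to `ℂ^{ℓ(w)}`, where `ℓ(w)` is the number of
inversions of `w`; the free entries are exactly the `(i,k)` with `i < k` and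
`w(i) > w(k)` and they give the coordinates of the homeomorphism, while all other
above-diagonal entries vanish. -/
theorem schubert_cell_group (n : ℕ) (w : Equiv.Perm (Fin n)) :
    InUw w (1 : Matrix (Fin n) (Fin n) ℂ) ∧
    (∀ u v : Matrix (Fin n) (Fin n) ℂ, InUw w u → InUw w v → InUw w (u * v)) ∧
    (∀ u v : Matrix (Fin n) (Fin n) ℂ, InUw w u → v * u = 1 → u * v = 1 → InUw w v) ∧
    Nonempty ({u : Matrix (Fin n) (Fin n) ℂ // InUw w u} ≃ₜ
      (Fin ((Finset.univ.filter (fun p : Fin n × Fin n =>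
        p.1 < p.2 ∧ w p.2 < w p.1)).card) → ℂ)) ∧
    ∃ e : {u : Matrix (Fin n) (Fin n) ℂ // InUw w u} ≃ₜ
        ({p : Fin n × Fin n // p.1 < p.2 ∧ w p.2 < w p.1} → ℂ),
      ∀ (u : {u : Matrix (Fin n) (Fin n) ℂ // InUw w u})
        (p : {p : Fin n × Fin n // p.1 < p.2 ∧ w p.2 < w p.1}),
        e u p = (u : Matrix (Fin n) (Fin n) ℂ) p.1.1 p.1.2 := by
  refine ⟨SchubertAux.one_mem w, fun u v hu hv => SchubertAux.mul_mem w hu hv,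
    fun u v hu hvu _ => SchubertAux.inv_mem w hu hvu, ?_, ?_⟩
  · have hcard : Fintype.card {p : Fin n × Fin n // p.1 < p.2 ∧ w p.2 < w p.1} =
        (Finset.univ.filter (fun p : Fin n × Fin n => p.1 < p.2 ∧ w p.2 < w p.1)).card :=
      Fintype.card_subtype _
    exact ⟨(SchubertAux.coordEquiv w).trans
      (Homeomorph.piCongrLeft (Y := fun _ => ℂ)
        (Fintype.equivFinOfCardEq hcard).symm).symm⟩
  · exact ⟨SchubertAux.coordEquiv w, fun u p => rfl⟩
end

section
/- Let N be a strictly upper-triangular nilpotent n×n matrix in highest form, w a permutation, and h a Hessenberg function with Hessenberg space H. If the Schubert cell C_w intersects the Hessenberg variety H(N,H) nontrivially—i.e., there exists u ∈ U_w with w^{-1} u^{-1} N u w ∈ H—then N ∈ wHw^{-1}, i.e., N_{kj} ≠ 0 implies w^{-1}(k) ≤ h(w^{-1}(j)). -/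
/-- The Hessenberg space of `h` as a set of matrices. -/
def HessSpace {n : ℕ} (h : Fin n → Fin n) : Set (Matrix (Fin n) (Fin n) ℂ) :=
  {M | ∀ a b : Fin n, h b < a → M a b = 0}

/-- If the Schubert cell `C_w` meets the Hessenberg variety `H(N,H)`, i.e. there is
`u ∈ U_w` with `w⁻¹ u⁻¹ N u w ∈ H`, then `N ∈ wHw⁻¹`. -/
theorem nonempty_cell_pivot_condition (n : ℕ) (h : Fin n → Fin n)
    (hmono : Monotone h) (hge : ∀ i, i ≤ h i)
    (w : Equiv.Perm (Fin n)) (N : Matrix (Fin n) (Fin n) ℂ)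
    (hN : ∀ a b : Fin n, b ≤ a → N a b = 0) (hHF : HighestForm N)
    (honly : ∀ k j : Fin n, N k j ≠ 0 → IsPivot N k j)
    (hcell : ∃ u v : Matrix (Fin n) (Fin n) ℂ, InUw w u ∧ v * u = 1 ∧ u * v = 1 ∧
      (w⁻¹).permMatrix ℂ * (v * N * u) * w.permMatrix ℂ ∈ HessSpace h) :
    ∃ X ∈ HessSpace (n := n) h,
      N = w.permMatrix ℂ * X * (w⁻¹).permMatrix ℂ := by
  obtain ⟨u, v, ⟨⟨hudiag, hutri⟩, -⟩, hvu, huv, hHess⟩ := hcell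
  -- v is the inverse of u, hence also upper triangular with unit diagonal
  haveI : Invertible u := invertibleOfRightInverse u v huv
  have hveq : u⁻¹ = v := Matrix.inv_eq_right_inv huv
  have huBT : u.BlockTriangular id := fun i j hij => hutri i j hij
  have hvtri : ∀ i j : Fin n, j < i → v i j = 0 := by
    have := Matrix.blockTriangular_inv_of_blockTriangular huBT
    rw [hveq] at this
    exact fun i j hij => this hij
  have hvdiag : ∀ i, v i i = 1 := by
    intro i
    have h1 : (v * u) i i = 1 := by rw [hvu]; simp
    rw [Matrix.mul_apply] at h1
    rw [Finset.sum_eq_single i] at h1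
    · rwa [hudiag, mul_one] at h1
    · intro b _ hb
      rcases lt_or_gt_of_ne hb with hlt | hgt
      · rw [hvtri i b hlt, zero_mul]
      · rw [hutri b i hgt, mul_zero]
    · simp
  -- unique pivot row per column
  have hpuniq : ∀ (a i b : Fin n), IsPivot N a b → IsPivot N i b → a = i := by
    intro a i b hp1 hp2
    by_contra hne
    rcases lt_or_gt_of_ne hne with hlt | hgt
    · exact hp2.1 (hp1.2.2 i hlt)
    · exact hp1.1 (hp2.2.2 a hgt)
  obtain ⟨r, hrmono, hr⟩ := hHF
  have hrpiv : ∀ (a b : Fin n), IsPivot N a b → r b = (a : ℕ) + 1 := by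
    intro a b hp
    rcases hr b with ⟨-, hno⟩ | ⟨i, hpi, hri⟩
    · exact absurd hp (hno a)
    · rw [hri, hpuniq a i b hp hpi]
  -- key: conjugation by unipotent upper triangular preserves values at pivots
  have key : ∀ k j : Fin n, N k j ≠ 0 → (v * N * u) k j = N k j := by
    intro k j hkj
    have hpiv := honly k j hkj
    -- lower-left entries relative to the pivot vanish
    have hLL : ∀ a b : Fin n, k < a → b < j → N a b = 0 := by
      intro a b hka hbj
      by_contra hab
      have hp2 := honly a b hab
      have h1 : r b = (a : ℕ) + 1 := hrpiv a b hp2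
      have h2 : r j = (k : ℕ) + 1 := hrpiv k j hpiv
      have := hrmono hbj.le
      rw [h1, h2] at this
      omega
    have hVN : ∀ b : Fin n, b < j → (v * N) k b = 0 := by
      intro b hbj
      rw [Matrix.mul_apply]
      apply Finset.sum_eq_zero
      intro a _
      rcases lt_trichotomy a k with hlt | heq | hgt
      · rw [hvtri k a hlt, zero_mul]
      · rw [heq, hpiv.2.1 b hbj, mul_zero]
      · rw [hLL a b hgt hbj, mul_zero]
    have hVNkj : (v * N) k j = N k j := by
      rw [Matrix.mul_apply, Finset.sum_eq_single k]
      · rw [hvdiag, one_mul]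
      · intro a _ ha
        rcases lt_or_gt_of_ne ha with hlt | hgt
        · rw [hvtri k a hlt, zero_mul]
        · rw [hpiv.2.2 a hgt, mul_zero]
      · simp
    rw [Matrix.mul_apply, Finset.sum_eq_single j]
    · rw [hVNkj, hudiag, mul_one]
    · intro b _ hb
      rcases lt_or_gt_of_ne hb with hlt | hgt
      · rw [hVN b hlt, zero_mul]
      · rw [hutri b j hgt, mul_zero]
    · simp
  -- entries of the conjugated matrix
  have hM : ∀ a b : Fin n, h b < a → (v * N * u) (w⁻¹ a) (w⁻¹ b) = 0 := by
    intro a b hab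
    have := hHess a b hab
    simp only [Equiv.Perm.permMatrix, PEquiv.toMatrix_toPEquiv_mul,
      PEquiv.mul_toMatrix_toPEquiv, Matrix.submatrix_apply, id,
      Equiv.Perm.inv_def, Equiv.symm_symm] at this ⊢
    exact this
  refine ⟨(w⁻¹).permMatrix ℂ * N * w.permMatrix ℂ, ?_, ?_⟩
  · intro a b hab
    simp only [Equiv.Perm.permMatrix, PEquiv.toMatrix_toPEquiv_mul,
      PEquiv.mul_toMatrix_toPEquiv, Matrix.submatrix_apply, id,
      Equiv.Perm.inv_def, Equiv.symm_symm]
    by_contra hne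
    exact absurd (key _ _ hne ▸ hM a b hab) hne
  · ext i j
    simp [Equiv.Perm.permMatrix, PEquiv.toMatrix_toPEquiv_mul,
      PEquiv.mul_toMatrix_toPEquiv, Equiv.Perm.inv_def]
end
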